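/- Under the standing hypotheses, assume R is an α-partial Galois extension of R^α. Then the following are equivalent: (a) t_α(R) = R^α; (b) R is a generator for the category of right R^α-modules; (c) the Morita context (R⋆_αG, R^α, R, R, τ, τ') is strict, i.e. both τ and τ' are surjective. -/
import Mathlib


universe u

/-- A groupoid in the algebraic sense of Lawson: a non-empty set `G` with a
partially defined binary operation (here modeled by a total operation `mul`
whose value is only constrained when it is defined, i.e. when `d g = r h`),
an inversion `inv`, and domain/range maps `d`, `r`. -/
structure AlgGroupoid (G : Type u) where
  mul : G → G → G
  inv : G → G
  d : G → G
  r : G → G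
  mul_assoc' : ∀ g h l, d g = r h → d h = r l → mul (mul g h) l = mul g (mul h l)
  mul_d : ∀ g, mul g (d g) = g
  r_mul : ∀ g, mul (r g) g = g
  inv_mul : ∀ g, mul (inv g) g = d g
  mul_inv : ∀ g, mul g (inv g) = r g
  d_mul : ∀ g h, d g = r h → d (mul g h) = d h
  r_mul' : ∀ g h, d g = r h → r (mul g h) = r g
  d_inv : ∀ g, d (inv g) = r g
  r_inv : ∀ g, r (inv g) = d g
  inv_inv : ∀ g, inv (inv g) = g
  d_d : ∀ g, d (d g) = d g
  r_d : ∀ g, r (d g) = d g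
  d_r : ∀ g, d (r g) = r g
  r_r : ∀ g, r (r g) = r g

/-- `e` is an identity element of the groupoid `𝔾`, i.e. an element of `G₀`. -/
def AlgGroupoid.isId {G : Type u} (𝔾 : AlgGroupoid G) (e : G) : Prop := 𝔾.d e = e

instance {G : Type u} [DecidableEq G] (𝔾 : AlgGroupoid G) (e : G) : Decidable (𝔾.isId e) :=
  inferInstanceAs (Decidable (𝔾.d e = e))

/-- `D` is a two-sided ideal of `E` (both being subsets of an ambient
non-unital ring `T`). -/
structure IsIdealIn {T : Type u} [NonUnitalRing T] (D E : Set T) : Prop where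
  subset : D ⊆ E
  zero_mem : (0 : T) ∈ D
  add_mem : ∀ ⦃x y : T⦄, x ∈ D → y ∈ D → x + y ∈ D
  neg_mem : ∀ ⦃x : T⦄, x ∈ D → -x ∈ D
  mul_mem_left : ∀ ⦃x y : T⦄, x ∈ E → y ∈ D → x * y ∈ D
  mul_mem_right : ∀ ⦃x y : T⦄, x ∈ D → y ∈ E → x * y ∈ D

/-- `u` is a (two-sided) multiplicative identity element of the subset `D`. -/
def IsIdentityElem {T : Type u} [NonUnitalRing T] (u : T) (D : Set T) : Prop :=
  u ∈ D ∧ ∀ x ∈ D, u * x = x ∧ x * u = x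

/-- A partial action `α = ({D_g}, {α_g})` of a groupoid `𝔾` on the ring whose
carrier is the subset `R` of the ambient non-unital ring `T` (take
`R = Set.univ` for a partial action on `T` itself).  For each `g`, `D (r g)`
is an ideal of `R`, `D g` is an ideal of `D (r g)` and `act g` restricts to a
ring isomorphism from `D (inv g)` onto `D g`; moreover `act e` is the identity
of `D e` for identities `e`, and for composable `g, h` the map `act (mul g h)`
extends `act g ∘ act h` (whose domain is `(act h)⁻¹ (D (inv g) ∩ D h)`). -/
structure PartialGroupoidAction {G : Type u} (𝔾 : AlgGroupoid G) (T : Type u)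
    [NonUnitalRing T] (R : Set T) where
  D : G → Set T
  act : G → T → T
  ideal_r : ∀ g, IsIdealIn (D (𝔾.r g)) R
  ideal : ∀ g, IsIdealIn (D g) (D (𝔾.r g))
  bijOn : ∀ g, Set.BijOn (act g) (D (𝔾.inv g)) (D g)
  map_add : ∀ g, ∀ x ∈ D (𝔾.inv g), ∀ y ∈ D (𝔾.inv g), act g (x + y) = act g x + act g y
  map_mul : ∀ g, ∀ x ∈ D (𝔾.inv g), ∀ y ∈ D (𝔾.inv g), act g (x * y) = act g x * act g y
  act_id : ∀ e, 𝔾.isId e → ∀ x ∈ D e, act e x = x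
  dom_cond : ∀ g h, 𝔾.d g = 𝔾.r h → ∀ x ∈ D (𝔾.inv h), act h x ∈ D (𝔾.inv g) →
    x ∈ D (𝔾.inv (𝔾.mul g h))
  comp_cond : ∀ g h, 𝔾.d g = 𝔾.r h → ∀ x ∈ D (𝔾.inv h), act h x ∈ D (𝔾.inv g) →
    act g (act h x) = act (𝔾.mul g h) x

/-- The partial action `α` is global if, for all composable `g, h`, the
composite `α_g ∘ α_h` (taken on its largest possible domain) coincides with
`α_{gh}`; since both maps always agree on the domain of the composite, this
amounts to the equality of the two domains. -/
def PartialGroupoidAction.IsGlobal {G : Type u} {𝔾 : AlgGroupoid G} {T : Type u}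
    [NonUnitalRing T] {R : Set T} (α : PartialGroupoidAction 𝔾 T R) : Prop :=
  ∀ g h, 𝔾.d g = 𝔾.r h →
    {x | x ∈ α.D (𝔾.inv h) ∧ α.act h x ∈ α.D (𝔾.inv g)} = α.D (𝔾.inv (𝔾.mul g h))

/-- A realization of the (partial) skew groupoid ring `R ⋆_α G` on the ring
`A`: the maps `δ g : D_g → A`, `x ↦ x·δ_g`, are additive, their images are
independent and span `A` (so `A = ⊕_{g ∈ G} D_g δ_g` as an additive group),
and multiplication is given by
`(x δ_g)(y δ_h) = α_g(α_{g⁻¹}(x) y) δ_{gh}` if `(g,h) ∈ G²` and `0` otherwise. -/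
structure SkewRingRep {G : Type u} (𝔾 : AlgGroupoid G) {T : Type u} [NonUnitalRing T]
    {R : Set T} (α : PartialGroupoidAction 𝔾 T R) (A : Type u) [NonUnitalRing A] where
  δ : G → T → A
  map_add : ∀ g, ∀ x ∈ α.D g, ∀ y ∈ α.D g, δ g (x + y) = δ g x + δ g y
  mul_of : ∀ g h, 𝔾.d g = 𝔾.r h → ∀ x ∈ α.D g, ∀ y ∈ α.D h,
    δ g x * δ h y = δ (𝔾.mul g h) (α.act g (α.act (𝔾.inv g) x * y))
  mul_of_ne : ∀ g h, 𝔾.d g ≠ 𝔾.r h → ∀ x ∈ α.D g, ∀ y ∈ α.D h, δ g x * δ h y = 0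
  indep : ∀ (s : Finset G) (c : G → T), (∀ g, c g ∈ α.D g) →
    (∑ g ∈ s, δ g (c g)) = 0 → ∀ g ∈ s, c g = 0
  spans : ∀ a : A, ∃ (s : Finset G) (c : G → T), (∀ g, c g ∈ α.D g) ∧ a = ∑ g ∈ s, δ g (c g)

/-- The subring `R^α` of invariants of `R` under the partial action `α`,
where `one g` denotes the identity element `1_g` of the ideal `D_g`. -/
def invariants {G : Type u} (𝔾 : AlgGroupoid G) {R : Type u} [Ring R]
    (α : PartialGroupoidAction 𝔾 R (Set.univ : Set R)) (one : G → R) : Set R :=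
  {x : R | ∀ g : G, α.act g (x * one (𝔾.inv g)) = x * one g}

/-- The trace map `t_α : R → R`, `t_α(x) = ∑_{g ∈ G} α_g(x 1_{g⁻¹})`. -/
def traceMap {G : Type u} [Fintype G] (𝔾 : AlgGroupoid G) {R : Type u} [Ring R]
    (α : PartialGroupoidAction 𝔾 R (Set.univ : Set R)) (one : G → R) (x : R) : R :=
  ∑ g : G, α.act g (x * one (𝔾.inv g))

/-- `R` is an `α`-partial Galois extension of `R^α`: there is a partial Galois
coordinate system `x_i, y_i ∈ R` with
`∑_i x_i α_g(y_i 1_{g⁻¹}) = δ_{e,g} 1_e` for all `e ∈ G₀`, `g ∈ G`. -/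
def IsPartialGalois {G : Type u} [Fintype G] [DecidableEq G] (𝔾 : AlgGroupoid G)
    {R : Type u} [Ring R] (α : PartialGroupoidAction 𝔾 R (Set.univ : Set R))
    (one : G → R) : Prop :=
  ∃ (n : ℕ) (xs ys : Fin n → R), ∀ g : G,
    ∑ i, xs i * α.act g (ys i * one (𝔾.inv g)) = if 𝔾.isId g then one g else 0


section Helpers

variable {G : Type u} {𝔾 : AlgGroupoid G} {R : Type u} [Ring R]
  {α : PartialGroupoidAction 𝔾 R (Set.univ : Set R)} {one : G → R}

theorem gl1 (𝔾 : AlgGroupoid G) (g h : G) (hc : 𝔾.d g = 𝔾.r h) :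
    𝔾.mul (𝔾.mul g h) (𝔾.inv h) = g := by
  rw [𝔾.mul_assoc' g h (𝔾.inv h) hc (𝔾.r_inv h).symm, 𝔾.mul_inv, ← hc, 𝔾.mul_d]

theorem gl2 (𝔾 : AlgGroupoid G) (g h : G) (hc : 𝔾.d g = 𝔾.r h) :
    𝔾.mul (𝔾.inv g) (𝔾.mul g h) = h := by
  rw [← 𝔾.mul_assoc' (𝔾.inv g) g h (𝔾.d_inv g) hc, 𝔾.inv_mul, hc, 𝔾.r_mul]

theorem r_eq_of_isId (𝔾 : AlgGroupoid G) {e : G} (he : 𝔾.isId e) : 𝔾.r e = e := by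
  rw [show 𝔾.r e = 𝔾.r (𝔾.d e) by rw [he], 𝔾.r_d, he]

theorem gl4 (𝔾 : AlgGroupoid G) {e : G} (he : 𝔾.isId e) : 𝔾.inv e = e := by
  have h1 : 𝔾.r e = e := r_eq_of_isId 𝔾 he
  have h2 : 𝔾.mul (𝔾.inv e) e = 𝔾.inv e := by
    have := 𝔾.mul_d (𝔾.inv e)
    rwa [𝔾.d_inv, h1] at this
  have h3 : 𝔾.mul (𝔾.inv e) e = e := by rw [𝔾.inv_mul]; exact he
  rw [← h2, h3]

-- membership helpers
theorem memD_r {g : G} {w : R} (hw : w ∈ α.D g) : w ∈ α.D (𝔾.r g) := (α.ideal g).subset hw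

theorem memD_dh {h : G} {w : R} (hw : w ∈ α.D (𝔾.inv h)) : w ∈ α.D (𝔾.d h) := by
  have := (α.ideal (𝔾.inv h)).subset hw; rwa [𝔾.r_inv] at this

theorem memD_mul_left (hone : ∀ g, IsIdentityElem (one g) (α.D g)) {g : G} (x : R) {w : R}
    (hw : w ∈ α.D g) : x * w ∈ α.D g := by
  have h1 : one g ∈ α.D (𝔾.r g) := (α.ideal g).subset (hone g).1
  have h2 : x * one g ∈ α.D (𝔾.r g) := (α.ideal_r g).mul_mem_left trivial h1
  have h3 : x * one g * w ∈ α.D g := (α.ideal g).mul_mem_left h2 hw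
  rwa [mul_assoc, ((hone g).2 w hw).1] at h3

theorem memD_mul_right (hone : ∀ g, IsIdentityElem (one g) (α.D g))
    (hcentral : ∀ g (x : R), one g * x = x * one g) {g : G} {w : R}
    (hw : w ∈ α.D g) (x : R) : w * x ∈ α.D g := by
  have h1 : x * one g ∈ α.D g := memD_mul_left hone x (hone g).1
  have h2 : w * (x * one g) ∈ α.D g := (α.ideal g).mul_mem_left ((α.ideal g).subset hw) h1
  have h3 : w * x = w * (x * one g) := by
    rw [← hcentral, ← mul_assoc, ((hone g).2 w hw).2]
  rwa [← h3] at h2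

theorem memD_sum {ι : Type*} {g : G} (s : Finset ι) (f : ι → R)
    (hf : ∀ i ∈ s, f i ∈ α.D g) : (∑ i ∈ s, f i) ∈ α.D g := by
  classical
  induction s using Finset.cons_induction with
  | empty => simpa using (α.ideal g).zero_mem
  | cons a s ha ih =>
    rw [Finset.sum_cons]
    exact (α.ideal g).add_mem (hf a (Finset.mem_cons_self a s))
      (ih (fun i hi => hf i (Finset.mem_cons_of_mem hi)))

theorem act_zero (g : G) : α.act g 0 = 0 := by
  have h0 : (0:R) ∈ α.D (𝔾.inv g) := (α.ideal _).zero_mem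
  have h := α.map_add g 0 h0 0 h0
  rw [add_zero] at h
  exact left_eq_add.mp h

theorem act_mem {g : G} {x : R} (hx : x ∈ α.D (𝔾.inv g)) : α.act g x ∈ α.D g :=
  (α.bijOn g).mapsTo hx

theorem act_inv_mem {g : G} {x : R} (hx : x ∈ α.D g) :
    α.act (𝔾.inv g) x ∈ α.D (𝔾.inv g) := by
  have : x ∈ α.D (𝔾.inv (𝔾.inv g)) := by rwa [𝔾.inv_inv]
  exact act_mem this

theorem act_inv_act (g : G) {x : R} (hx : x ∈ α.D (𝔾.inv g)) :
    α.act (𝔾.inv g) (α.act g x) = x := by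
  have hmem : α.act g x ∈ α.D (𝔾.inv (𝔾.inv g)) := by rw [𝔾.inv_inv]; exact act_mem hx
  have hcomp := α.comp_cond (𝔾.inv g) g (𝔾.d_inv g) x hx hmem
  rw [𝔾.inv_mul] at hcomp
  rw [hcomp]
  have hx' : x ∈ α.D (𝔾.d g) := memD_dh hx
  exact α.act_id _ (𝔾.d_d g) x hx'

theorem act_act_inv (g : G) {x : R} (hx : x ∈ α.D g) :
    α.act g (α.act (𝔾.inv g) x) = x := by
  have hx' : x ∈ α.D (𝔾.inv (𝔾.inv g)) := by rwa [𝔾.inv_inv]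
  have := act_inv_act (α := α) (𝔾.inv g) hx'
  rwa [𝔾.inv_inv] at this

theorem act_sum {ι : Type*} (g : G) (s : Finset ι) (f : ι → R)
    (hf : ∀ i ∈ s, f i ∈ α.D (𝔾.inv g)) :
    α.act g (∑ i ∈ s, f i) = ∑ i ∈ s, α.act g (f i) := by
  classical
  induction s using Finset.cons_induction with
  | empty => simpa using act_zero (α := α) g
  | cons a s ha ih =>
    rw [Finset.sum_cons, Finset.sum_cons,
      α.map_add g _ (hf a (Finset.mem_cons_self a s)) _
        (memD_sum s f (fun i hi => hf i (Finset.mem_cons_of_mem hi))),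
      ih (fun i hi => hf i (Finset.mem_cons_of_mem hi))]

theorem S1 (hc : 𝔾.d g = 𝔾.r h) {w : R} (hw1 : w ∈ α.D (𝔾.inv h))
    (hw2 : w ∈ α.D (𝔾.inv (𝔾.mul g h))) : α.act h w ∈ α.D (𝔾.inv g) := by
  have hx : α.act h w ∈ α.D h := act_mem hw1
  have hxx : α.act h w ∈ α.D (𝔾.inv (𝔾.inv h)) := by rw [𝔾.inv_inv]; exact hx
  have h2 : α.act (𝔾.inv h) (α.act h w) ∈ α.D (𝔾.inv (𝔾.mul g h)) := by
    rw [act_inv_act h hw1]; exact hw2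
  have hcc : 𝔾.d (𝔾.mul g h) = 𝔾.r (𝔾.inv h) := by rw [𝔾.r_inv, 𝔾.d_mul g h hc]
  have := α.dom_cond (𝔾.mul g h) (𝔾.inv h) hcc _ hxx h2
  rwa [gl1 𝔾 g h hc] at this

theorem S2 (hone : ∀ g, IsIdentityElem (one g) (α.D g))
    (hcentral : ∀ g (x : R), one g * x = x * one g)
    {g h : G} (hc : 𝔾.d g = 𝔾.r h) :
    α.act h (one (𝔾.inv h) * one (𝔾.inv (𝔾.mul g h))) = one h * one (𝔾.inv g) := by
  set w : R := one (𝔾.inv h) * one (𝔾.inv (𝔾.mul g h)) with hw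
  have hw1 : w ∈ α.D (𝔾.inv h) := memD_mul_right hone hcentral (hone (𝔾.inv h)).1 _
  have hw2 : w ∈ α.D (𝔾.inv (𝔾.mul g h)) := memD_mul_left hone _ (hone _).1
  set p : R := α.act h w with hp
  have hp1 : p ∈ α.D h := act_mem hw1
  have hp2 : p ∈ α.D (𝔾.inv g) := S1 hc hw1 hw2
  set q : R := one h * one (𝔾.inv g) with hq
  have hqh : q ∈ α.D h := memD_mul_right hone hcentral (hone h).1 _
  have hpq1 : p * q = p := by
    rw [hq, ← mul_assoc, ((hone h).2 p hp1).2, ((hone (𝔾.inv g)).2 p hp2).2]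
  have hr1 : α.act (𝔾.inv h) q ∈ α.D (𝔾.inv h) := act_inv_mem hqh
  have hr2 : α.act (𝔾.inv h) q ∈ α.D (𝔾.inv (𝔾.mul g h)) := by
    apply α.dom_cond g h hc _ hr1
    rw [act_act_inv h hqh]
    exact memD_mul_left hone _ (hone _).1
  set r' : R := α.act (𝔾.inv h) q with hr'
  have hwr : w * r' = r' := by
    rw [hw, mul_assoc, ((hone (𝔾.inv (𝔾.mul g h))).2 r' hr2).1,
      ((hone (𝔾.inv h)).2 r' hr1).1]
  have hpq2 : p * q = q := by
    have hmm := α.map_mul h w hw1 r' hr1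
    rw [hwr, ← hp, act_act_inv h hqh] at hmm
    exact hmm.symm
  rw [← hpq1, hpq2]

theorem KI (hone : ∀ g, IsIdentityElem (one g) (α.D g))
    (hcentral : ∀ g (x : R), one g * x = x * one g)
    {g h : G} (hc : 𝔾.d g = 𝔾.r h) {b : R} (hb : b ∈ α.D h) :
    α.act (𝔾.mul g h) (α.act (𝔾.inv h) b * one (𝔾.inv (𝔾.mul g h))) =
      α.act g (b * one (𝔾.inv g)) := by
  set u : R := α.act (𝔾.inv h) b with hu
  have hu1 : u ∈ α.D (𝔾.inv h) := act_inv_mem hb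
  set w₁ : R := u * one (𝔾.inv (𝔾.mul g h)) with hw₁
  have hw1 : w₁ ∈ α.D (𝔾.inv h) := memD_mul_right hone hcentral hu1 _
  have hw2 : w₁ ∈ α.D (𝔾.inv (𝔾.mul g h)) := memD_mul_left hone _ (hone _).1
  have hmemg : α.act h w₁ ∈ α.D (𝔾.inv g) := S1 hc hw1 hw2
  have hcomp := α.comp_cond g h hc w₁ hw1 hmemg
  -- compute act h w₁
  have hones : one (𝔾.inv h) * one (𝔾.inv (𝔾.mul g h)) ∈ α.D (𝔾.inv h) :=
    memD_mul_right hone hcentral (hone (𝔾.inv h)).1 _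
  have hsplit : w₁ = u * (one (𝔾.inv h) * one (𝔾.inv (𝔾.mul g h))) := by
    rw [hw₁, ← mul_assoc, ((hone (𝔾.inv h)).2 u hu1).2]
  have hactw : α.act h w₁ = b * one (𝔾.inv g) := by
    rw [hsplit, α.map_mul h u hu1 _ hones, hu, act_act_inv h hb, S2 hone hcentral hc,
      ← mul_assoc, ((hone h).2 b hb).2]
  rw [← hcomp, hactw]

theorem one_idem (hone : ∀ g, IsIdentityElem (one g) (α.D g)) (g : G) :
    one g * one g = one g := ((hone g).2 (one g) (hone g).1).1

theorem shuffle (hone : ∀ g, IsIdentityElem (one g) (α.D g))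
    (hcentral : ∀ g (x : R), one g * x = x * one g) (k : G) (x y : R) :
    x * y * one k = (x * one k) * (y * one k) := by
  calc x * y * one k = x * (y * one k) := by rw [mul_assoc]
    _ = x * (one k * (y * one k)) := by
        rw [hcentral, mul_assoc, one_idem hone, ← hcentral, ← mul_assoc, ← hcentral]
    _ = (x * one k) * (y * one k) := by rw [← mul_assoc]

theorem chunkA_term (hone : ∀ g, IsIdentityElem (one g) (α.D g))
    (hcentral : ∀ g (x : R), one g * x = x * one g)
    {h g : G} (hc : 𝔾.d h = 𝔾.r g) (x : R) :
    α.act h (α.act g (x * one (𝔾.inv g)) * one (𝔾.inv h)) =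
      α.act (𝔾.mul h g) (x * one (𝔾.inv (𝔾.mul h g))) * one h := by
  have hxg : x * one (𝔾.inv g) ∈ α.D (𝔾.inv g) := memD_mul_left hone x (hone _).1
  have hb : α.act g (x * one (𝔾.inv g)) ∈ α.D g := act_mem hxg
  have hKI := KI hone hcentral hc hb
  rw [act_inv_act g hxg] at hKI
  rw [← hKI]
  have hxk : x * one (𝔾.inv (𝔾.mul h g)) ∈ α.D (𝔾.inv (𝔾.mul h g)) :=
    memD_mul_left hone x (hone _).1
  have hok : one (𝔾.inv (𝔾.mul h g)) * one (𝔾.inv g) ∈ α.D (𝔾.inv (𝔾.mul h g)) :=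
    memD_mul_right hone hcentral (hone _).1 _
  have harg : (x * one (𝔾.inv g)) * one (𝔾.inv (𝔾.mul h g)) =
      (x * one (𝔾.inv (𝔾.mul h g))) * (one (𝔾.inv (𝔾.mul h g)) * one (𝔾.inv g)) := by
    calc x * one (𝔾.inv g) * one (𝔾.inv (𝔾.mul h g))
        = x * (one (𝔾.inv g) * one (𝔾.inv (𝔾.mul h g))) := by rw [mul_assoc]
      _ = x * (one (𝔾.inv (𝔾.mul h g)) * one (𝔾.inv g)) := by rw [hcentral]
      _ = x * ((one (𝔾.inv (𝔾.mul h g)) * one (𝔾.inv (𝔾.mul h g))) * one (𝔾.inv g)) := by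
          rw [one_idem hone]
      _ = (x * one (𝔾.inv (𝔾.mul h g))) * (one (𝔾.inv (𝔾.mul h g)) * one (𝔾.inv g)) := by
          rw [mul_assoc, mul_assoc]
  rw [harg, α.map_mul (𝔾.mul h g) _ hxk _ hok]
  have hS2 : α.act (𝔾.mul h g) (one (𝔾.inv (𝔾.mul h g)) * one (𝔾.inv g)) =
      one (𝔾.mul h g) * one h := by
    have hc2 : 𝔾.d (𝔾.inv h) = 𝔾.r (𝔾.mul h g) := by rw [𝔾.d_inv, 𝔾.r_mul' h g hc]
    have hs := S2 (α := α) hone hcentral hc2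
    rwa [gl2 𝔾 h g hc, 𝔾.inv_inv] at hs
  rw [hS2, ← mul_assoc, ((hone (𝔾.mul h g)).2 _ (act_mem hxk)).2]

variable [Fintype G] [DecidableEq G]

theorem trace_mem (hone : ∀ g, IsIdentityElem (one g) (α.D g))
    (hcentral : ∀ g (x : R), one g * x = x * one g)
    (horth : ∀ e f, 𝔾.isId e → 𝔾.isId f → e ≠ f →
      ∀ x ∈ α.D e, ∀ y ∈ α.D f, x * y = 0)
    (x : R) : traceMap 𝔾 α one x ∈ invariants 𝔾 α one := by
  intro h
  rw [traceMap, Finset.sum_mul, Finset.sum_mul,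
    act_sum h Finset.univ _ (fun g _ => memD_mul_left hone _ (hone (𝔾.inv h)).1)]
  have hzL : ∀ g : G, ¬ (𝔾.d h = 𝔾.r g) →
      α.act h (α.act g (x * one (𝔾.inv g)) * one (𝔾.inv h)) = 0 := by
    intro g hne
    have h0 : α.act g (x * one (𝔾.inv g)) * one (𝔾.inv h) = 0 :=
      horth (𝔾.r g) (𝔾.d h) (𝔾.d_r g) (𝔾.d_d h) (fun e => hne e.symm) _
        (memD_r (act_mem (memD_mul_left hone x (hone _).1))) _ (memD_dh (hone (𝔾.inv h)).1)
    rw [h0, act_zero]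
  have hzR : ∀ k : G, ¬ (𝔾.r k = 𝔾.r h) → α.act k (x * one (𝔾.inv k)) * one h = 0 := by
    intro k hne
    exact horth (𝔾.r k) (𝔾.r h) (𝔾.d_r k) (𝔾.d_r h) hne _
      (memD_r (act_mem (memD_mul_left hone x (hone _).1))) _ (memD_r (hone h).1)
  rw [← Finset.sum_filter_of_ne (s := Finset.univ)
        (p := fun g => 𝔾.d h = 𝔾.r g) (fun g _ hg => by by_contra hn; exact hg (hzL g hn)),
      ← Finset.sum_filter_of_ne (s := Finset.univ)
        (p := fun k => 𝔾.r k = 𝔾.r h) (fun k _ hk => by by_contra hn; exact hk (hzR k hn))]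
  refine Finset.sum_bij' (fun g _ => 𝔾.mul h g) (fun k _ => 𝔾.mul (𝔾.inv h) k)
    ?_ ?_ ?_ ?_ ?_
  · intro g hg
    rw [Finset.mem_filter] at hg ⊢
    exact ⟨Finset.mem_univ _, 𝔾.r_mul' h g hg.2⟩
  · intro k hk
    rw [Finset.mem_filter] at hk ⊢
    refine ⟨Finset.mem_univ _, ?_⟩
    rw [𝔾.r_mul' (𝔾.inv h) k (by rw [𝔾.d_inv, hk.2]), 𝔾.r_inv]
  · intro g hg
    rw [Finset.mem_filter] at hg
    exact gl2 𝔾 h g hg.2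
  · intro k hk
    rw [Finset.mem_filter] at hk
    have hch : 𝔾.d (𝔾.inv h) = 𝔾.r k := by rw [𝔾.d_inv, hk.2]
    have := gl2 𝔾 (𝔾.inv h) k hch
    rwa [𝔾.inv_inv] at this
  · intro g hg
    rw [Finset.mem_filter] at hg
    exact chunkA_term hone hcentral hg.2 x

theorem trace_add (hone : ∀ g, IsIdentityElem (one g) (α.D g)) (x y : R) :
    traceMap 𝔾 α one (x + y) = traceMap 𝔾 α one x + traceMap 𝔾 α one y := by
  rw [traceMap, traceMap, traceMap, ← Finset.sum_add_distrib]
  refine Finset.sum_congr rfl (fun g _ => ?_)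
  rw [add_mul, α.map_add g _ (memD_mul_left hone x (hone _).1) _ (memD_mul_left hone y (hone _).1)]

theorem trace_smul (hone : ∀ g, IsIdentityElem (one g) (α.D g))
    (hcentral : ∀ g (x : R), one g * x = x * one g)
    {r : R} (hr : r ∈ invariants 𝔾 α one) (x : R) :
    traceMap 𝔾 α one (x * r) = traceMap 𝔾 α one x * r := by
  rw [traceMap, traceMap, Finset.sum_mul]
  refine Finset.sum_congr rfl (fun g _ => ?_)
  rw [shuffle hone hcentral, α.map_mul g _ (memD_mul_left hone x (hone _).1)
    _ (memD_mul_left hone r (hone _).1), hr g,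
    show r * one g = one g * r from (hcentral g r).symm, ← mul_assoc,
    ((hone g).2 _ (act_mem (memD_mul_left hone x (hone _).1))).2]

theorem trace_smul_left (hone : ∀ g, IsIdentityElem (one g) (α.D g))
    (hcentral : ∀ g (x : R), one g * x = x * one g)
    {r : R} (hr : r ∈ invariants 𝔾 α one) (x : R) :
    traceMap 𝔾 α one (r * x) = r * traceMap 𝔾 α one x := by
  rw [traceMap, traceMap, Finset.mul_sum]
  refine Finset.sum_congr rfl (fun g _ => ?_)
  rw [shuffle hone hcentral, α.map_mul g _ (memD_mul_left hone r (hone _).1)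
    _ (memD_mul_left hone x (hone _).1), hr g, mul_assoc,
    ((hone g).2 _ (act_mem (memD_mul_left hone x (hone _).1))).1]

theorem addfun_zero {f : R → R} (hf : ∀ u v : R, f (u + v) = f u + f v) : f 0 = 0 := by
  have h := hf 0 0
  rw [add_zero] at h
  exact left_eq_add.mp h

theorem addfun_map_sum {f : R → R} (hf : ∀ u v : R, f (u + v) = f u + f v)
    {ι : Type*} (s : Finset ι) (g : ι → R) :
    f (∑ i ∈ s, g i) = ∑ i ∈ s, f (g i) := by
  classical
  induction s using Finset.cons_induction with
  | empty => simpa using addfun_zero hf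
  | cons a s ha ih => rw [Finset.sum_cons, Finset.sum_cons, hf, ih]

theorem star_formula (hone : ∀ g, IsIdentityElem (one g) (α.D g))
    (hcentral : ∀ g (x : R), one g * x = x * one g)
    (hunit : (1 : R) = ∑ e ∈ Finset.univ.filter (fun e => 𝔾.isId e), one e)
    {n : ℕ} {X Y : Fin n → R}
    (hXY : ∀ g : G, ∑ i, X i * α.act g (Y i * one (𝔾.inv g)) =
      if 𝔾.isId g then one g else 0) (x : R) :
    ∑ i, X i * traceMap 𝔾 α one (Y i * x) = x := by
  have key : ∀ g : G, ∑ i, X i * α.act g (Y i * x * one (𝔾.inv g)) =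
      if 𝔾.isId g then x * one g else 0 := by
    intro g
    have hsplit : ∀ i, α.act g (Y i * x * one (𝔾.inv g)) =
        α.act g (Y i * one (𝔾.inv g)) * α.act g (x * one (𝔾.inv g)) := by
      intro i
      rw [shuffle hone hcentral, α.map_mul g _ (memD_mul_left hone (Y i) (hone _).1)
        _ (memD_mul_left hone x (hone _).1)]
    calc ∑ i, X i * α.act g (Y i * x * one (𝔾.inv g))
        = (∑ i, X i * α.act g (Y i * one (𝔾.inv g))) * α.act g (x * one (𝔾.inv g)) := by
          rw [Finset.sum_mul]
          exact Finset.sum_congr rfl (fun i _ => by rw [hsplit i, ← mul_assoc])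
      _ = (if 𝔾.isId g then one g else 0) * α.act g (x * one (𝔾.inv g)) := by rw [hXY g]
      _ = if 𝔾.isId g then x * one g else 0 := by
          by_cases hg : 𝔾.isId g
          · rw [if_pos hg, if_pos hg]
            have hinv : 𝔾.inv g = g := gl4 𝔾 hg
            rw [hinv, α.act_id g hg _ (memD_mul_left hone x (hone _).1),
              ((hone g).2 _ (memD_mul_left hone x (hone _).1)).1]
          · rw [if_neg hg, if_neg hg, zero_mul]
  calc ∑ i, X i * traceMap 𝔾 α one (Y i * x)
      = ∑ i, ∑ g : G, X i * α.act g (Y i * x * one (𝔾.inv g)) := by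
        exact Finset.sum_congr rfl (fun i _ => by rw [traceMap, Finset.mul_sum])
    _ = ∑ g : G, ∑ i, X i * α.act g (Y i * x * one (𝔾.inv g)) := Finset.sum_comm
    _ = ∑ g : G, if 𝔾.isId g then x * one g else 0 := Finset.sum_congr rfl (fun g _ => key g)
    _ = ∑ e ∈ Finset.univ.filter (fun e => 𝔾.isId e), x * one e := (Finset.sum_filter _ _).symm
    _ = x := by rw [← Finset.mul_sum, ← hunit, mul_one]

variable {A : Type u} [Ring A] {σ : SkewRingRep 𝔾 α A}

theorem delta_zero (σ : SkewRingRep 𝔾 α A) (g : G) : σ.δ g 0 = 0 := by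
  have h0 : (0:R) ∈ α.D g := (α.ideal g).zero_mem
  have h := σ.map_add g 0 h0 0 h0
  rw [add_zero] at h
  exact left_eq_add.mp h

theorem delta_sum (σ : SkewRingRep 𝔾 α A) (g : G) {ι : Type*} (s : Finset ι) (f : ι → R)
    (hf : ∀ i ∈ s, f i ∈ α.D g) :
    σ.δ g (∑ i ∈ s, f i) = ∑ i ∈ s, σ.δ g (f i) := by
  classical
  induction s using Finset.cons_induction with
  | empty => simpa using delta_zero σ g
  | cons a s ha ih =>
    rw [Finset.sum_cons, Finset.sum_cons,
      σ.map_add g _ (hf a (Finset.mem_cons_self a s)) _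
        (memD_sum s f (fun i hi => hf i (Finset.mem_cons_of_mem hi))),
      ih (fun i hi => hf i (Finset.mem_cons_of_mem hi))]

theorem expr_delta (hone : ∀ g, IsIdentityElem (one g) (α.D g))
    (hcentral : ∀ g (x : R), one g * x = x * one g)
    (horth : ∀ e f, 𝔾.isId e → 𝔾.isId f → e ≠ f →
      ∀ x ∈ α.D e, ∀ y ∈ α.D f, x * y = 0)
    (σ : SkewRingRep 𝔾 α A) {n : ℕ} {X Y : Fin n → R}
    (hXY : ∀ g : G, ∑ i, X i * α.act g (Y i * one (𝔾.inv g)) =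
      if 𝔾.isId g then one g else 0)
    {h : G} {c : R} (hcD : c ∈ α.D h) :
    σ.δ h c = ∑ i : Fin n, ∑ g : G,
      σ.δ g (X i * α.act g (α.act (𝔾.inv h) (Y i * c) * one (𝔾.inv g))) := by
  have hYc : ∀ i, Y i * c ∈ α.D h := fun i => memD_mul_left hone (Y i) hcD
  have hw : ∀ i, α.act (𝔾.inv h) (Y i * c) ∈ α.D (𝔾.inv h) := fun i => act_inv_mem (hYc i)
  have hmemg : ∀ (g : G) (i : Fin n),
      X i * α.act g (α.act (𝔾.inv h) (Y i * c) * one (𝔾.inv g)) ∈ α.D g :=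
    fun g i => memD_mul_left hone _ (act_mem (memD_mul_left hone _ (hone _).1))
  rw [Finset.sum_comm]
  have hterm : ∀ g : G, (∑ i : Fin n,
      σ.δ g (X i * α.act g (α.act (𝔾.inv h) (Y i * c) * one (𝔾.inv g)))) =
      if g = h then σ.δ h c else 0 := by
    intro g
    rw [← delta_sum σ g Finset.univ _ (fun i _ => hmemg g i)]
    by_cases hdd : 𝔾.d g = 𝔾.d h
    · -- g is composable with h⁻¹
      have hcg : 𝔾.d g = 𝔾.r (𝔾.inv h) := by rw [𝔾.r_inv, hdd]
      have hcgp : 𝔾.d (𝔾.mul g (𝔾.inv h)) = 𝔾.r h := by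
        rw [𝔾.d_mul g (𝔾.inv h) hcg, 𝔾.d_inv]
      have hgg : 𝔾.mul (𝔾.mul g (𝔾.inv h)) h = g := by
        rw [𝔾.mul_assoc' g (𝔾.inv h) h hcg (by rw [𝔾.d_inv]), 𝔾.inv_mul, ← hdd, 𝔾.mul_d]
      have hKIi : ∀ i, α.act g (α.act (𝔾.inv h) (Y i * c) * one (𝔾.inv g)) =
          α.act (𝔾.mul g (𝔾.inv h)) (Y i * c * one (𝔾.inv (𝔾.mul g (𝔾.inv h)))) := by
        intro i
        have := KI hone hcentral hcgp (hYc i)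
        rwa [hgg] at this
      set g' := 𝔾.mul g (𝔾.inv h) with hg'
      have hsum : (∑ i : Fin n, X i * α.act g (α.act (𝔾.inv h) (Y i * c) * one (𝔾.inv g)))
          = (if 𝔾.isId g' then one g' else 0) * α.act g' (c * one (𝔾.inv g')) := by
        rw [← hXY g', Finset.sum_mul]
        refine Finset.sum_congr rfl (fun i _ => ?_)
        rw [hKIi i, shuffle hone hcentral, α.map_mul g' _ (memD_mul_left hone (Y i) (hone _).1)
          _ (memD_mul_left hone c (hone _).1), mul_assoc]
      by_cases hgh : g = h
      · subst hgh
        have hg'rg : g' = 𝔾.r g := by rw [hg', 𝔾.mul_inv]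
        have hid : 𝔾.isId g' := by rw [hg'rg]; exact 𝔾.d_r g
        have hinv : 𝔾.inv g' = g' := gl4 𝔾 hid
        have hcr : c ∈ α.D g' := by rw [hg'rg]; exact memD_r hcD
        rw [if_pos rfl, hsum, if_pos hid, hinv,
          α.act_id g' hid _ (memD_mul_left hone c (hone _).1),
          ((hone g').2 c hcr).2, ((hone g').2 c hcr).1]
      · have hnid : ¬ 𝔾.isId g' := by
          intro hid
          apply hgh
          have hrh : g' = 𝔾.r h := by rw [← hid]; exact hcgp
          rw [← hgg, hrh]
          exact 𝔾.r_mul h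
        rw [if_neg hgh, hsum, if_neg hnid, zero_mul, delta_zero]
    · -- all terms vanish
      have hzero : ∀ i : Fin n,
          X i * α.act g (α.act (𝔾.inv h) (Y i * c) * one (𝔾.inv g)) = 0 := by
        intro i
        have h0 : α.act (𝔾.inv h) (Y i * c) * one (𝔾.inv g) = 0 :=
          horth (𝔾.d h) (𝔾.d g) (𝔾.d_d h) (𝔾.d_d g) (fun e => hdd e.symm) _
            (memD_dh (hw i)) _ (memD_dh (hone (𝔾.inv g)).1)
        rw [h0, act_zero, mul_zero]
      rw [Finset.sum_congr rfl (fun i _ => hzero i), Finset.sum_const_zero, delta_zero,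
        if_neg (fun hgh => hdd (by rw [hgh]))]
  rw [Finset.sum_congr rfl (fun g _ => hterm g), Finset.sum_ite_eq' Finset.univ h
    (fun _ => σ.δ h c), if_pos (Finset.mem_univ h)]

theorem trace_zero : traceMap 𝔾 α one 0 = 0 := by
  rw [traceMap]
  exact Finset.sum_eq_zero (fun g _ => by rw [zero_mul, act_zero])

theorem trace_neg (hone : ∀ g, IsIdentityElem (one g) (α.D g)) (x : R) :
    traceMap 𝔾 α one (-x) = - traceMap 𝔾 α one x := by
  have h := trace_add (α := α) hone x (-x)
  rw [add_neg_cancel, trace_zero] at h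
  exact (neg_eq_of_add_eq_zero_right h.symm).symm

theorem expr_sum (hone : ∀ g, IsIdentityElem (one g) (α.D g))
    (hcentral : ∀ g (x : R), one g * x = x * one g)
    (horth : ∀ e f, 𝔾.isId e → 𝔾.isId f → e ≠ f →
      ∀ x ∈ α.D e, ∀ y ∈ α.D f, x * y = 0)
    (σ : SkewRingRep 𝔾 α A) {n : ℕ} {X Y : Fin n → R}
    (hXY : ∀ g : G, ∑ i, X i * α.act g (Y i * one (𝔾.inv g)) =
      if 𝔾.isId g then one g else 0)
    (s : Finset G) (c : G → R) (hc : ∀ g, c g ∈ α.D g) :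
    ∃ (k : ℕ) (xs ys : Fin k → R), (∑ g ∈ s, σ.δ g (c g)) =
      ∑ i, ∑ g : G, σ.δ g (xs i * α.act g (ys i * one (𝔾.inv g))) := by
  classical
  induction s using Finset.cons_induction with
  | empty => exact ⟨0, ![], ![], by simp⟩
  | cons a s ha ih =>
    obtain ⟨k₂, xs₂, ys₂, h₂⟩ := ih
    refine ⟨n + k₂, Fin.append X xs₂,
      Fin.append (fun i => α.act (𝔾.inv a) (Y i * c a)) ys₂, ?_⟩
    rw [Finset.sum_cons, h₂, expr_delta hone hcentral horth σ hXY (hc a),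
      Fin.sum_univ_add]
    congr 1
    · exact Finset.sum_congr rfl (fun i _ => by rw [Fin.append_left, Fin.append_left])
    · exact Finset.sum_congr rfl (fun i _ => by rw [Fin.append_right, Fin.append_right])

end Helpers

/-- **Theorem 5.3 (viii) ⇔ (ix) ⇔ (x)**: under the standing hypotheses,
assume `R` is an `α`-partial Galois extension of `R^α`.  Then the following
are equivalent: (a) `t_α(R) = R^α`; (b) `R` is a generator for the category
of right `R^α`-modules (its trace ideal equals `R^α`); (c) the Morita
context `(R⋆_αG, R^α, R, R, τ, τ')` is strict, i.e. `τ` and `τ'` are both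
surjective. -/
theorem trace_surjective_iff_generator_iff_strict {G : Type u} [Nonempty G] [Fintype G]
    [DecidableEq G] (𝔾 : AlgGroupoid G) {R : Type u} [Ring R]
    (α : PartialGroupoidAction 𝔾 R (Set.univ : Set R))
    (one : G → R) (hone : ∀ g, IsIdentityElem (one g) (α.D g))
    (hcentral : ∀ g (x : R), one g * x = x * one g)
    (horth : ∀ e f, 𝔾.isId e → 𝔾.isId f → e ≠ f → ∀ x ∈ α.D e, ∀ y ∈ α.D f, x * y = 0)
    (hunit : (1 : R) = ∑ e ∈ Finset.univ.filter (fun e => 𝔾.isId e), one e)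
    {A : Type u} [Ring A] (σ : SkewRingRep 𝔾 α A)
    (h1A : (1 : A) = ∑ e ∈ Finset.univ.filter (fun e => 𝔾.isId e), σ.δ e (one e))
    (hGal : IsPartialGalois 𝔾 α one) :
    let traceIdeal : Set R :=
      ↑(AddSubgroup.closure {y : R | ∃ f : R → R,
          (∀ u v : R, f (u + v) = f u + f v) ∧
          (∀ x : R, ∀ r ∈ invariants 𝔾 α one, f (x * r) = f x * r) ∧
          (∀ x : R, f x ∈ invariants 𝔾 α one) ∧ ∃ x : R, y = f x})
    (({y : R | ∃ x : R, traceMap 𝔾 α one x = y} = invariants 𝔾 α one) ↔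
      traceIdeal = invariants 𝔾 α one) ∧
    ((traceIdeal = invariants 𝔾 α one) ↔
      ((∀ r ∈ invariants 𝔾 α one, ∃ x : R, traceMap 𝔾 α one x = r) ∧
       (∀ a : A, ∃ (k : ℕ) (xs ys : Fin k → R),
          a = ∑ i, ∑ g : G, σ.δ g (xs i * α.act g (ys i * one (𝔾.inv g)))))) := by
  intro traceIdeal
  classical
  obtain ⟨n, X, Y, hXY⟩ := hGal
  set T : Set R := {y : R | ∃ x : R, traceMap 𝔾 α one x = y} with hT
  have hTinv : T ⊆ invariants 𝔾 α one := by
    rintro y ⟨x, rfl⟩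
    exact trace_mem hone hcentral horth x
  have key : traceIdeal = T := by
    show (↑(AddSubgroup.closure {y : R | ∃ f : R → R,
          (∀ u v : R, f (u + v) = f u + f v) ∧
          (∀ x : R, ∀ r ∈ invariants 𝔾 α one, f (x * r) = f x * r) ∧
          (∀ x : R, f x ∈ invariants 𝔾 α one) ∧ ∃ x : R, y = f x}) : Set R) = T
    apply subset_antisymm
    · let T' : AddSubgroup R :=
        { carrier := T
          zero_mem' := ⟨0, trace_zero⟩
          add_mem' := by rintro a b ⟨x, rfl⟩ ⟨y, rfl⟩; exact ⟨x + y, trace_add hone x y⟩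
          neg_mem' := by rintro a ⟨x, rfl⟩; exact ⟨-x, trace_neg hone x⟩ }
      have hle : AddSubgroup.closure {y : R | ∃ f : R → R,
          (∀ u v : R, f (u + v) = f u + f v) ∧
          (∀ x : R, ∀ r ∈ invariants 𝔾 α one, f (x * r) = f x * r) ∧
          (∀ x : R, f x ∈ invariants 𝔾 α one) ∧ ∃ x : R, y = f x} ≤ T' := by
        apply (AddSubgroup.closure_le T').mpr
        rintro y ⟨f, hfadd, hflin, hfinv, x, rfl⟩
        refine ⟨∑ i, f (X i) * (Y i * x), ?_⟩
        calc traceMap 𝔾 α one (∑ i, f (X i) * (Y i * x))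
            = ∑ i, traceMap 𝔾 α one (f (X i) * (Y i * x)) :=
              addfun_map_sum (trace_add hone) _ _
          _ = ∑ i, f (X i) * traceMap 𝔾 α one (Y i * x) :=
              Finset.sum_congr rfl
                (fun i _ => trace_smul_left hone hcentral (hfinv (X i)) _)
          _ = ∑ i, f (X i * traceMap 𝔾 α one (Y i * x)) :=
              (Finset.sum_congr rfl (fun i _ =>
                hflin (X i) _ (trace_mem hone hcentral horth _))).symm
          _ = f (∑ i, X i * traceMap 𝔾 α one (Y i * x)) := (addfun_map_sum hfadd _ _).symm
          _ = f x := by rw [star_formula hone hcentral hunit hXY x]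
      exact fun y hy => hle hy
    · intro y hy
      obtain ⟨x, rfl⟩ := hy
      apply AddSubgroup.subset_closure
      exact ⟨traceMap 𝔾 α one, trace_add hone,
        fun z r hr => trace_smul hone hcentral hr z,
        fun z => trace_mem hone hcentral horth z, x, rfl⟩
  refine ⟨by rw [key], ?_, ?_⟩
  · intro hTI
    refine ⟨?_, ?_⟩
    · intro r hr
      have hrT : r ∈ T := by rw [key] at hTI; rw [hTI]; exact hr
      exact hrT
    · intro a
      obtain ⟨s, c, hc, rfl⟩ := σ.spans a
      exact expr_sum hone hcentral horth σ hXY s c hc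
  · rintro ⟨h1, _⟩
    rw [key]
    exact Set.Subset.antisymm hTinv (fun r hr => h1 r hr)
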